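/- arXiv:2411.12579 — 7 statements merged into one kernel-verified Lean document; each statement's English description precedes it below -/
import Mathlib

section
/- Let n ≥ 2 and p, q ≥ 0 and let c_j(n,p,q) = (−1)^j p! q! (n−2)! / (j!(p−j)!(q−j)!(j+n−2)!). Define the polynomial g : ℂⁿ → ℂ by g(z) = Σ_{j=0}^{min(p,q)} c_j(n,p,q) · z₁^{p−j} · conj(z₁)^{q−j} · ‖(z₂,…,zₙ)‖₂^{2j}. Then g is harmonic with respect to the complex Laplacian Δ = Σ_{j=1}^n ∂²/(∂z_j ∂conj(z_j)). -/
/-!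
Write `a = z₀` and `S = ∑_{k ≠ 0} |z_k|²`. On the tail variables,
`Σ_{k ≠ 0} ∂_k ∂̄_k S^m = m(m-1) S^(m-1) + (n-1) m S^(m-1)`, so the Laplacian maps
`a^α ā^β S^m` to `αβ a^(α-1) ā^(β-1) S^m + m(m+n-2) a^α ā^β S^(m-1)`. Applied to `g`, the monomial
`a^(p-j-1) ā^(q-j-1) S^j` collects the coefficient `c_j (p-j)(q-j) + c_{j+1} (j+1)(j+n-1)`,
which vanishes by the factorial formula for the `c_j`.
-/

open Complex

/-- Wirtinger derivative ∂/∂z_j of `f` at `z`, via real Fréchet derivatives. -/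
noncomputable def wirtingerD {n : ℕ} (j : Fin n) (f : (Fin n → ℂ) → ℂ) (z : Fin n → ℂ) : ℂ :=
  (1 / 2) * (fderiv ℝ f z (Pi.single j 1) - Complex.I * fderiv ℝ f z (Pi.single j Complex.I))

/-- Wirtinger derivative ∂/∂conj(z_j) of `f` at `z`. -/
noncomputable def wirtingerDBar {n : ℕ} (j : Fin n) (f : (Fin n → ℂ) → ℂ) (z : Fin n → ℂ) : ℂ :=
  (1 / 2) * (fderiv ℝ f z (Pi.single j 1) + Complex.I * fderiv ℝ f z (Pi.single j Complex.I))

/-- The complex Laplacian Δ = Σ_j ∂²/(∂z_j ∂conj(z_j)). -/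
noncomputable def complexLaplacian {n : ℕ} (f : (Fin n → ℂ) → ℂ) (z : Fin n → ℂ) : ℂ :=
  ∑ j : Fin n, wirtingerD j (fun w => wirtingerDBar j f w) z

open ComplexConjugate

section WirtingerCalculus

variable {n : ℕ} (j : Fin n) {f g : (Fin n → ℂ) → ℂ} {z : Fin n → ℂ}

lemma wirtingerD_const (a : ℂ) : wirtingerD j (fun _ => a) z = 0 := by
  simp [wirtingerD]

lemma wirtingerD_mul (hf : DifferentiableAt ℝ f z) (hg : DifferentiableAt ℝ g z) :
    wirtingerD j (fun w => f w * g w) z = f z * wirtingerD j g z + g z * wirtingerD j f z := by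
  simp only [wirtingerD, fderiv_fun_mul hf hg, add_apply, smul_apply, smul_eq_mul]
  ring

lemma wirtingerDBar_mul (hf : DifferentiableAt ℝ f z) (hg : DifferentiableAt ℝ g z) :
    wirtingerDBar j (fun w => f w * g w) z
      = f z * wirtingerDBar j g z + g z * wirtingerDBar j f z := by
  simp only [wirtingerDBar, fderiv_fun_mul hf hg, add_apply, smul_apply, smul_eq_mul]
  ring

lemma wirtingerD_pow (hf : DifferentiableAt ℝ f z) (m : ℕ) :
    wirtingerD j (fun w => f w ^ m) z = m * f z ^ (m - 1) * wirtingerD j f z := by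
  simp only [wirtingerD, fderiv_fun_pow m hf, smul_apply, smul_eq_mul, nsmul_eq_mul]
  ring

lemma wirtingerDBar_pow (hf : DifferentiableAt ℝ f z) (m : ℕ) :
    wirtingerDBar j (fun w => f w ^ m) z = m * f z ^ (m - 1) * wirtingerDBar j f z := by
  simp only [wirtingerDBar, fderiv_fun_pow m hf, smul_apply, smul_eq_mul, nsmul_eq_mul]
  ring

lemma wirtingerD_sum {ι : Type*} (s : Finset ι) {F : ι → (Fin n → ℂ) → ℂ}
    (hF : ∀ i ∈ s, DifferentiableAt ℝ (F i) z) :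
    wirtingerD j (fun w => ∑ i ∈ s, F i w) z = ∑ i ∈ s, wirtingerD j (F i) z := by
  simp only [wirtingerD, fderiv_fun_sum hF, FunLike.coe_sum, Finset.sum_apply,
    Finset.mul_sum, ← Finset.sum_sub_distrib]

lemma wirtingerDBar_sum {ι : Type*} (s : Finset ι) {F : ι → (Fin n → ℂ) → ℂ}
    (hF : ∀ i ∈ s, DifferentiableAt ℝ (F i) z) :
    wirtingerDBar j (fun w => ∑ i ∈ s, F i w) z = ∑ i ∈ s, wirtingerDBar j (F i) z := by
  simp only [wirtingerDBar, fderiv_fun_sum hF, FunLike.coe_sum, Finset.sum_apply,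
    Finset.mul_sum, ← Finset.sum_add_distrib]

lemma wirtingerD_const_mul (hf : DifferentiableAt ℝ f z) (a : ℂ) :
    wirtingerD j (fun w => a * f w) z = a * wirtingerD j f z := by
  simp only [wirtingerD, fderiv_const_mul hf, smul_apply, smul_eq_mul]
  ring

lemma wirtingerDBar_const_mul (hf : DifferentiableAt ℝ f z) (a : ℂ) :
    wirtingerDBar j (fun w => a * f w) z = a * wirtingerDBar j f z := by
  simp only [wirtingerDBar, fderiv_const_mul hf, smul_apply, smul_eq_mul]
  ring

lemma wirtingerD_apply (k : Fin n) : wirtingerD j (fun w => w k) z = if k = j then 1 else 0 := by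
  rw [wirtingerD, (hasFDerivAt_apply k z).fderiv]
  by_cases hk : k = j
  · subst hk
    simp only [ContinuousLinearMap.proj_apply, Pi.single_eq_same, I_mul_I, if_pos]
    ring
  · simp [hk]

lemma wirtingerDBar_apply (k : Fin n) : wirtingerDBar j (fun w => w k) z = 0 := by
  rw [wirtingerDBar, (hasFDerivAt_apply k z).fderiv]
  by_cases hk : k = j
  · subst hk; simp
  · simp [hk]

lemma hasFDerivAt_conj_apply (k : Fin n) (z : Fin n → ℂ) :
    HasFDerivAt (fun w : Fin n → ℂ => conj (w k))
      ((conjCLE : ℂ →L[ℝ] ℂ).comp (ContinuousLinearMap.proj k)) z :=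
  conjCLE.hasFDerivAt.comp z (hasFDerivAt_apply k z)

lemma wirtingerD_conj_apply (k : Fin n) : wirtingerD j (fun w => conj (w k)) z = 0 := by
  rw [wirtingerD, (hasFDerivAt_conj_apply k z).fderiv]
  by_cases hk : k = j
  · subst hk; simp
  · simp [hk]

lemma wirtingerDBar_conj_apply (k : Fin n) :
    wirtingerDBar j (fun w => conj (w k)) z = if k = j then 1 else 0 := by
  rw [wirtingerDBar, (hasFDerivAt_conj_apply k z).fderiv]
  by_cases hk : k = j
  · subst hk
    simp only [ContinuousLinearMap.comp_apply, ContinuousLinearMap.proj_apply,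
      Pi.single_eq_same, ContinuousLinearEquiv.coe_coe, ContinuousAlgEquiv.coeCLE_apply,
      conjCAE_apply, map_one, conj_I, mul_neg, I_mul_I, neg_neg, if_pos]
    ring
  · simp [hk]

lemma differentiable_wirtingerDBar (hf : ContDiff ℝ 2 f) :
    Differentiable ℝ (fun w => wirtingerDBar j f w) := by
  have hf' := (hf.fderiv_right (m := 1) (by norm_num)).differentiable one_ne_zero
  unfold wirtingerDBar
  fun_prop

lemma complexLaplacian_sum {ι : Type*} (s : Finset ι) {F : ι → (Fin n → ℂ) → ℂ}
    (hF : ∀ i ∈ s, ContDiff ℝ 2 (F i)) :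
    complexLaplacian (fun w => ∑ i ∈ s, F i w) z = ∑ i ∈ s, complexLaplacian (F i) z := by
  have hDBar (j : Fin n) : (fun w => wirtingerDBar j (fun w => ∑ i ∈ s, F i w) w)
      = fun w => ∑ i ∈ s, wirtingerDBar j (F i) w :=
    funext fun w => wirtingerDBar_sum j s fun i hi =>
      ((hF i hi).differentiable two_ne_zero).differentiableAt
  simp only [complexLaplacian, hDBar]
  rw [Finset.sum_comm]
  exact Finset.sum_congr rfl fun j _ => wirtingerD_sum j s fun i hi =>
    (differentiable_wirtingerDBar j (hF i hi)).differentiableAt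

lemma complexLaplacian_const_mul (hf : ContDiff ℝ 2 f) (a : ℂ) :
    complexLaplacian (fun w => a * f w) z = a * complexLaplacian f z := by
  have hDBar (j : Fin n) : (fun w => wirtingerDBar j (fun w => a * f w) w)
      = fun w => a * wirtingerDBar j f w :=
    funext fun w => wirtingerDBar_const_mul j (hf.differentiable two_ne_zero).differentiableAt a
  simp only [complexLaplacian, hDBar, Finset.mul_sum]
  exact Finset.sum_congr rfl fun j _ =>
    wirtingerD_const_mul j (differentiable_wirtingerDBar j hf).differentiableAt a

end WirtingerCalculus

section ZonalMonomial

variable {n : ℕ} (i₀ : Fin n)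

noncomputable def tailNormSq (w : Fin n → ℂ) : ℂ :=
  ∑ k ∈ Finset.univ.erase i₀, w k * conj (w k)

noncomputable def zonalMonomial (a b m : ℕ) (w : Fin n → ℂ) : ℂ :=
  w i₀ ^ a * conj (w i₀) ^ b * tailNormSq i₀ w ^ m

@[fun_prop]
lemma contDiff_conj_apply {k : WithTop ℕ∞} (i : Fin n) :
    ContDiff ℝ k (fun w : Fin n → ℂ => conj (w i)) :=
  conjCLE.contDiff.comp (contDiff_apply ℝ ℂ i)

@[fun_prop]
lemma contDiff_tailNormSq {k : WithTop ℕ∞} : ContDiff ℝ k (tailNormSq i₀) := by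
  unfold tailNormSq; fun_prop

@[fun_prop]
lemma contDiff_zonalMonomial {k : WithTop ℕ∞} (a b m : ℕ) :
    ContDiff ℝ k (zonalMonomial i₀ a b m) := by
  unfold zonalMonomial; fun_prop

@[fun_prop]
lemma differentiable_tailNormSq : Differentiable ℝ (tailNormSq i₀) :=
  (contDiff_tailNormSq (k := 1) i₀).differentiable one_ne_zero

@[fun_prop]
lemma differentiable_zonalMonomial (a b m : ℕ) : Differentiable ℝ (zonalMonomial i₀ a b m) :=
  (contDiff_zonalMonomial (k := 1) i₀ a b m).differentiable one_ne_zero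

variable {i₀} {z : Fin n → ℂ}

lemma wirtingerD_tailNormSq (i : Fin n) :
    wirtingerD i (tailNormSq i₀) z = if i = i₀ then 0 else conj (z i) := by
  unfold tailNormSq
  rw [wirtingerD_sum i _ fun k _ => by fun_prop]
  simp (disch := fun_prop) only [wirtingerD_mul, wirtingerD_apply, wirtingerD_conj_apply,
    mul_zero, zero_add, mul_ite, mul_one, Finset.sum_ite_eq', Finset.mem_erase]
  by_cases h : i = i₀ <;> simp [h]

lemma wirtingerDBar_tailNormSq (i : Fin n) :
    wirtingerDBar i (tailNormSq i₀) z = if i = i₀ then 0 else z i := by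
  unfold tailNormSq
  rw [wirtingerDBar_sum i _ fun k _ => by fun_prop]
  simp (disch := fun_prop) only [wirtingerDBar_mul, wirtingerDBar_apply,
    wirtingerDBar_conj_apply, mul_zero, add_zero, mul_ite, mul_one, Finset.sum_ite_eq',
    Finset.mem_erase]
  by_cases h : i = i₀ <;> simp [h]

lemma wirtingerD_zonalMonomial_self (a b m : ℕ) :
    wirtingerD i₀ (zonalMonomial i₀ a b m) z = a * zonalMonomial i₀ (a - 1) b m z := by
  unfold zonalMonomial
  simp (disch := fun_prop) only [wirtingerD_mul, wirtingerD_pow, wirtingerD_apply,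
    wirtingerD_conj_apply, wirtingerD_tailNormSq, if_true, mul_zero, mul_one, zero_add]
  ring

lemma wirtingerDBar_zonalMonomial_self (a b m : ℕ) :
    wirtingerDBar i₀ (zonalMonomial i₀ a b m) z = b * zonalMonomial i₀ a (b - 1) m z := by
  unfold zonalMonomial
  simp (disch := fun_prop) only [wirtingerDBar_mul, wirtingerDBar_pow, wirtingerDBar_apply,
    wirtingerDBar_conj_apply, wirtingerDBar_tailNormSq, if_true, mul_zero, mul_one, zero_add]
  ring

lemma wirtingerD_zonalMonomial_of_ne {i : Fin n} (hi : i ≠ i₀) (a b m : ℕ) :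
    wirtingerD i (zonalMonomial i₀ a b m) z
      = m * zonalMonomial i₀ a b (m - 1) z * conj (z i) := by
  unfold zonalMonomial
  simp (disch := fun_prop) only [wirtingerD_mul, wirtingerD_pow, wirtingerD_apply,
    wirtingerD_conj_apply, wirtingerD_tailNormSq, hi, hi.symm, if_false, mul_zero,
    add_zero]
  ring

lemma wirtingerDBar_zonalMonomial_of_ne {i : Fin n} (hi : i ≠ i₀) (a b m : ℕ) :
    wirtingerDBar i (zonalMonomial i₀ a b m) z = m * zonalMonomial i₀ a b (m - 1) z * z i := by
  unfold zonalMonomial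
  simp (disch := fun_prop) only [wirtingerDBar_mul, wirtingerDBar_pow, wirtingerDBar_apply,
    wirtingerDBar_conj_apply, wirtingerDBar_tailNormSq, hi, hi.symm, if_false,
    mul_zero, add_zero]
  ring

end ZonalMonomial

section ZonalLaplacian

variable {n : ℕ} {i₀ : Fin n} {z : Fin n → ℂ}

lemma natCast_mul_zonalMonomial_pred_mul_tailNormSq (a b k : ℕ) :
    (k : ℂ) * zonalMonomial i₀ a b (k - 1) z * tailNormSq i₀ z
      = k * zonalMonomial i₀ a b k z := by
  rcases k with _ | k
  · simp
  · simp only [zonalMonomial, Nat.add_sub_cancel]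
    ring

lemma wirtingerD_wirtingerDBar_zonalMonomial_self (a b m : ℕ) :
    wirtingerD i₀ (fun w => wirtingerDBar i₀ (zonalMonomial i₀ a b m) w) z
      = a * b * zonalMonomial i₀ (a - 1) (b - 1) m z := by
  simp_rw [wirtingerDBar_zonalMonomial_self]
  rw [wirtingerD_const_mul _ (by fun_prop), wirtingerD_zonalMonomial_self]
  ring

lemma wirtingerD_wirtingerDBar_zonalMonomial_of_ne {i : Fin n} (hi : i ≠ i₀) (a b m : ℕ) :
    wirtingerD i (fun w => wirtingerDBar i (zonalMonomial i₀ a b m) w) z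
      = m * zonalMonomial i₀ a b (m - 1) z
        + m * (m - 1 : ℕ) * zonalMonomial i₀ a b (m - 1 - 1) z * (z i * conj (z i)) := by
  simp_rw [wirtingerDBar_zonalMonomial_of_ne hi]
  simp (disch := fun_prop) only [wirtingerD_mul, wirtingerD_const, wirtingerD_apply,
    wirtingerD_zonalMonomial_of_ne hi, if_true]
  ring

lemma complexLaplacian_zonalMonomial (a b m : ℕ) :
    complexLaplacian (zonalMonomial i₀ a b m) z
      = a * b * zonalMonomial i₀ (a - 1) (b - 1) m z
        + m * (m + n - 2 : ℕ) * zonalMonomial i₀ a b (m - 1) z := by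
  have hcard : (Finset.univ.erase i₀).card = n - 1 := by simp
  have htail : ∑ i ∈ Finset.univ.erase i₀,
      wirtingerD i (fun w => wirtingerDBar i (zonalMonomial i₀ a b m) w) z
        = m * (m - 1 + (n - 1) : ℕ) * zonalMonomial i₀ a b (m - 1) z := by
    rw [Finset.sum_congr rfl fun i hi =>
      wirtingerD_wirtingerDBar_zonalMonomial_of_ne (Finset.ne_of_mem_erase hi) a b m,
      Finset.sum_add_distrib, Finset.sum_const, ← Finset.mul_sum, hcard, nsmul_eq_mul]
    have hshift :=
      natCast_mul_zonalMonomial_pred_mul_tailNormSq (i₀ := i₀) (z := z) a b (m - 1)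
    simp only [tailNormSq] at hshift
    push_cast
    linear_combination (m : ℂ) * hshift
  rw [complexLaplacian, ← Finset.sum_erase_add _ _ (Finset.mem_univ i₀), htail,
    wirtingerD_wirtingerDBar_zonalMonomial_self]
  rcases m with _ | m
  · simp
  · have hdeg : m + 1 - 1 + (n - 1) = m + 1 + n - 2 := by have := i₀.pos; omega
    rw [hdeg]
    ring

end ZonalLaplacian

open Nat in
noncomputable def legendreCoeff (n p q j : ℕ) : ℝ :=
  (-1) ^ j * p ! * q ! * (n - 2)! / (j ! * (p - j)! * (q - j)! * (j + n - 2)!)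

lemma legendreCoeff_recurrence {n p q j : ℕ} (hn : 2 ≤ n) (hp : j < p) (hq : j < q) :
    legendreCoeff n p q j * ((p - j) * (q - j) : ℕ)
      + legendreCoeff n p q (j + 1) * ((j + 1) * (j + 1 + n - 2) : ℕ) = 0 := by
  obtain ⟨p, rfl⟩ := Nat.exists_eq_add_of_lt hp
  obtain ⟨q, rfl⟩ := Nat.exists_eq_add_of_lt hq
  obtain ⟨n, rfl⟩ := Nat.exists_eq_add_of_le hn
  simp only [legendreCoeff, show j + p + 1 - j = p + 1 by omega,
    show j + p + 1 - (j + 1) = p by omega, show j + q + 1 - j = q + 1 by omega,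
    show j + q + 1 - (j + 1) = q by omega, show j + (2 + n) - 2 = j + n by omega,
    show j + 1 + (2 + n) - 2 = j + n + 1 by omega, Nat.factorial_succ]
  field_simp
  push_cast
  ring

lemma Finset.sum_range_succ_add_eq_sum_range_add_succ {M : Type*} [AddCommMonoid M]
    {A B : ℕ → M} {m : ℕ} (hA : A m = 0) (hB : B 0 = 0) :
    ∑ j ∈ Finset.range (m + 1), (A j + B j) = ∑ j ∈ Finset.range m, (A j + B (j + 1)) := by
  rw [Finset.sum_add_distrib, Finset.sum_range_succ, Finset.sum_range_succ', hA, hB, add_zero,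
    add_zero, Finset.sum_add_distrib]

theorem stmt_5 (n p q : ℕ) (hn : 2 ≤ n) (c : ℕ → ℝ)
    (hc : ∀ j ≤ min p q,
      c j = (-1) ^ j * (Nat.factorial p) * (Nat.factorial q) * (Nat.factorial (n - 2)) /
        ((Nat.factorial j) * (Nat.factorial (p - j)) * (Nat.factorial (q - j)) *
          (Nat.factorial (j + n - 2))))
    (g : (Fin n → ℂ) → ℂ)
    (hg : ∀ z : Fin n → ℂ,
      g z = ∑ j ∈ Finset.range (min p q + 1),
        (c j : ℂ) * (z ⟨0, by omega⟩) ^ (p - j) * (starRingEnd ℂ (z ⟨0, by omega⟩)) ^ (q - j) *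
          ((∑ k ∈ Finset.univ.erase (⟨0, by omega⟩ : Fin n),
            ((Complex.normSq (z k) : ℝ) : ℂ))) ^ j) :
    ∀ z : Fin n → ℂ, complexLaplacian g z = 0 := by
  intro z
  set i₀ : Fin n := ⟨0, by omega⟩
  have hg_eq : g = fun w => ∑ j ∈ Finset.range (min p q + 1),
      (c j : ℂ) * zonalMonomial i₀ (p - j) (q - j) j w := by
    funext w
    simp only [hg, zonalMonomial, tailNormSq, Complex.mul_conj, mul_assoc]
  rw [hg_eq, complexLaplacian_sum _ fun j _ => by fun_prop]
  simp only [complexLaplacian_const_mul (contDiff_zonalMonomial _ _ _ _),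
    complexLaplacian_zonalMonomial, mul_add]
  rw [Finset.sum_range_succ_add_eq_sum_range_add_succ
    (by rcases min_choice p q with h | h <;> simp [h]) (by simp)]
  refine Finset.sum_eq_zero fun j hj => ?_
  have hj : j < min p q := Finset.mem_range.mp hj
  have hrec := legendreCoeff_recurrence hn (lt_of_lt_of_le hj (min_le_left p q))
    (lt_of_lt_of_le hj (min_le_right p q))
  have hcoeff : ∀ j ≤ min p q, c j = legendreCoeff n p q j := hc
  rw [← hcoeff j hj.le, ← hcoeff (j + 1) hj] at hrec
  replace hrec := congrArg Complex.ofReal hrec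
  simp only [Nat.sub_sub, Nat.add_sub_cancel]
  push_cast at hrec ⊢
  linear_combination zonalMonomial i₀ (p - (j + 1)) (q - (j + 1)) j z * hrec
end

section
/- For n ≥ 2 and p, q ≥ 0: Σ_{j=0}^{min(p,q)} N_{n,p−j,q−j} = C(n−1+p, p)·C(n−1+q, q), where N_{n,a,b} = (n+a+b−1)·(n−2+a)!·(n−2+b)!/(a!·b!·(n−1)!·(n−2)!) and C denotes binomial coefficients. -/
private def Tterm (m a b : ℕ) : ℚ :=
  ((m + a + b + 1 : ℕ) : ℚ) * (Nat.factorial (m + a)) * (Nat.factorial (m + b)) /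
    ((Nat.factorial a) * (Nat.factorial b) * (Nat.factorial (m + 1)) * (Nat.factorial m))

private def Gterm (m a b : ℕ) : ℚ :=
  ((m + 1 + a).choose a) * ((m + 1 + b).choose b)

private lemma fact_ne (k : ℕ) : ((Nat.factorial k : ℚ)) ≠ 0 :=
  Nat.cast_ne_zero.2 k.factorial_ne_zero

private lemma Gterm_eq (m a b : ℕ) :
    Gterm m a b = ((m + 1 + a).factorial : ℚ) / (a.factorial * (m + 1).factorial) *
      (((m + 1 + b).factorial : ℚ) / (b.factorial * (m + 1).factorial)) := by
  rw [Gterm, Nat.cast_choose ℚ (Nat.le_add_left a (m + 1)),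
    Nat.cast_choose ℚ (Nat.le_add_left b (m + 1))]
  simp [Nat.add_sub_cancel]

private lemma key (m a b : ℕ) : Tterm m (a + 1) (b + 1) + Gterm m a b = Gterm m (a + 1) (b + 1) := by
  rw [Tterm, Gterm_eq, Gterm_eq,
    show m + (a + 1) = m + a + 1 by ring, show m + (b + 1) = m + b + 1 by ring,
    show m + 1 + (a + 1) = m + a + 1 + 1 by ring, show m + 1 + (b + 1) = m + b + 1 + 1 by ring,
    show m + 1 + a = m + a + 1 by ring, show m + 1 + b = m + b + 1 by ring,
    show m + a + 1 + (b + 1) + 1 = m + a + b + 3 by ring]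
  push_cast [Nat.factorial_succ]
  field_simp
  ring

private lemma base_a (m a : ℕ) : Tterm m a 0 = Gterm m a 0 := by
  rw [Tterm, Gterm_eq, show m + 1 + a = m + a + 1 by ring]
  push_cast [Nat.factorial_succ, Nat.factorial_zero]
  field_simp
  ring

private lemma base_b (m b : ℕ) : Tterm m 0 b = Gterm m 0 b := by
  rw [Tterm, Gterm_eq, show m + 1 + b = m + b + 1 by ring]
  push_cast [Nat.factorial_succ, Nat.factorial_zero]
  field_simp
  ring

private lemma sum_eq (m : ℕ) : ∀ k p q : ℕ, min p q = k →
    ∑ j ∈ Finset.range (k + 1), Tterm m (p - j) (q - j) = Gterm m p q := by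
  intro k
  induction k with
  | zero =>
    intro p q h
    rw [zero_add, Finset.sum_range_one]; simp only [Nat.sub_zero]
    rcases Nat.min_eq_zero_iff.mp h with h0 | h0 <;> subst h0
    · exact base_b m q
    · exact base_a m p
  | succ k ih =>
    intro p q h
    obtain ⟨p', rfl⟩ : ∃ p', p = p' + 1 := ⟨p - 1, by omega⟩
    obtain ⟨q', rfl⟩ : ∃ q', q = q' + 1 := ⟨q - 1, by omega⟩
    rw [Finset.sum_range_succ']
    have e1 : ∀ j : ℕ, p' + 1 - (j + 1) = p' - j := fun j => by omega
    have e2 : ∀ j : ℕ, q' + 1 - (j + 1) = q' - j := fun j => by omega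
    simp only [e1, e2, Nat.sub_zero]
    rw [ih p' q' (by omega), add_comm, key]

theorem stmt_7 (n p q : ℕ) (hn : 2 ≤ n) :
    ∑ j ∈ Finset.range (min p q + 1),
      (((n + (p - j) + (q - j) - 1 : ℕ) : ℚ) * (Nat.factorial (n - 2 + (p - j))) *
          (Nat.factorial (n - 2 + (q - j))) /
        ((Nat.factorial (p - j)) * (Nat.factorial (q - j)) * (Nat.factorial (n - 1)) *
          (Nat.factorial (n - 2)))) =
      (Nat.choose (n - 1 + p) p) * (Nat.choose (n - 1 + q) q) := by
  obtain ⟨m, rfl⟩ : ∃ m, n = m + 2 := ⟨n - 2, by omega⟩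
  have hsum := sum_eq m (min p q) p q rfl
  simp only [Tterm, Gterm] at hsum
  rw [show m + 2 - 1 + p = m + 1 + p by omega, show m + 2 - 1 + q = m + 1 + q by omega]
  rw [← hsum]
  apply Finset.sum_congr rfl
  intro j _
  rw [show m + 2 + (p - j) + (q - j) - 1 = m + (p - j) + (q - j) + 1 by omega,
    show m + 2 - 2 = m by omega, show m + 2 - 1 = m + 1 by omega]
end

section
/- For every natural number p ≥ 2, (p+2) · ∫₀¹ t^((p−1)/2) · |−p + (p+1)·t| dt = (p+2) · ( (8/(p+3))·(p/(p+1))^((p+3)/2) + 2/(p+1) − 4/(p+3) ). -/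
open Real intervalIntegral

theorem stmt_11 (p : ℕ) (hp : 2 ≤ p) :
    ((p : ℝ) + 2) * ∫ t in (0:ℝ)..1, t ^ (((p : ℝ) - 1) / 2) * |-(p : ℝ) + ((p : ℝ) + 1) * t| =
    ((p : ℝ) + 2) * (8 / ((p : ℝ) + 3) * ((p : ℝ) / ((p : ℝ) + 1)) ^ (((p : ℝ) + 3) / 2) +
      2 / ((p : ℝ) + 1) - 4 / ((p : ℝ) + 3)) := by
  have hp2 : (2:ℝ) ≤ (p:ℝ) := by exact_mod_cast hp
  set a : ℝ := ((p : ℝ) - 1) / 2 with ha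
  have ha0 : (0:ℝ) < a := by rw [ha]; linarith
  have ha1 : (-1:ℝ) < a := by linarith
  have ha2 : (-1:ℝ) < a + 1 := by linarith
  have hq1 : (0:ℝ) < (p:ℝ) + 1 := by linarith
  set c : ℝ := (p : ℝ) / ((p : ℝ) + 1) with hc
  have hc0 : 0 < c := by rw [hc]; positivity
  have hc1 : c ≤ 1 := by
    rw [hc, div_le_one hq1]; linarith
  -- t^a * t = t^(a+1) for 0 ≤ t
  have hmul : ∀ t : ℝ, 0 ≤ t → t ^ a * t = t ^ (a + 1) := by
    intro t ht
    rcases eq_or_lt_of_le ht with h | h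
    · rw [← h, Real.zero_rpow (by linarith), Real.zero_rpow (by linarith), mul_zero]
    · rw [Real.rpow_add_one h.ne']
  -- continuity / integrability of the integrand
  have hcont : Continuous fun t : ℝ => t ^ a * |-(p : ℝ) + ((p : ℝ) + 1) * t| := by
    apply Continuous.mul
    · exact continuous_iff_continuousAt.2 fun x =>
        Real.continuousAt_rpow_const x a (Or.inr ha0.le)
    · exact (continuous_const.add (continuous_const.mul continuous_id)).abs
  have hint1 : IntervalIntegrable (fun t : ℝ => t ^ a * |-(p : ℝ) + ((p : ℝ) + 1) * t|)
      MeasureTheory.volume 0 c := hcont.intervalIntegrable _ _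
  have hint2 : IntervalIntegrable (fun t : ℝ => t ^ a * |-(p : ℝ) + ((p : ℝ) + 1) * t|)
      MeasureTheory.volume c 1 := hcont.intervalIntegrable _ _
  have hira : IntervalIntegrable (fun t : ℝ => t ^ a) MeasureTheory.volume 0 c :=
    intervalIntegral.intervalIntegrable_rpow' ha1
  have hira' : IntervalIntegrable (fun t : ℝ => t ^ a) MeasureTheory.volume c 1 :=
    intervalIntegral.intervalIntegrable_rpow' ha1
  have hirb : IntervalIntegrable (fun t : ℝ => t ^ (a+1)) MeasureTheory.volume 0 c :=
    intervalIntegral.intervalIntegrable_rpow' ha2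
  have hirb' : IntervalIntegrable (fun t : ℝ => t ^ (a+1)) MeasureTheory.volume c 1 :=
    intervalIntegral.intervalIntegrable_rpow' ha2
  -- first piece
  have I1 : (∫ t in (0:ℝ)..c, t ^ a * |-(p : ℝ) + ((p : ℝ) + 1) * t|)
      = (p : ℝ) * (c ^ (a + 1) / (a + 1)) - ((p : ℝ) + 1) * (c ^ (a + 1 + 1) / (a + 1 + 1)) := by
    have hEq : Set.EqOn (fun t : ℝ => t ^ a * |-(p : ℝ) + ((p : ℝ) + 1) * t|)
        (fun t : ℝ => (p : ℝ) * t ^ a - ((p : ℝ) + 1) * t ^ (a + 1)) (Set.uIcc 0 c) := by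
      intro t ht
      rw [Set.uIcc_of_le hc0.le] at ht
      obtain ⟨ht0, htc⟩ := ht
      have hneg : -(p : ℝ) + ((p : ℝ) + 1) * t ≤ 0 := by
        have : ((p:ℝ)+1) * t ≤ ((p:ℝ)+1) * c := by
          exact mul_le_mul_of_nonneg_left htc (by linarith)
        rw [hc, mul_div_cancel₀ _ hq1.ne'] at this
        linarith
      simp only [abs_of_nonpos hneg]
      rw [← hmul t ht0]; ring
    rw [intervalIntegral.integral_congr hEq,
      intervalIntegral.integral_sub (hira.const_mul _) (hirb.const_mul _),
      intervalIntegral.integral_const_mul, intervalIntegral.integral_const_mul,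
      integral_rpow (Or.inl ha1), integral_rpow (Or.inl ha2),
      Real.zero_rpow (by linarith : a + 1 ≠ 0),
      Real.zero_rpow (by linarith : a + 1 + 1 ≠ 0)]
    ring
  -- second piece
  have I2 : (∫ t in c..(1:ℝ), t ^ a * |-(p : ℝ) + ((p : ℝ) + 1) * t|)
      = ((p : ℝ) + 1) * ((1 - c ^ (a + 1 + 1)) / (a + 1 + 1))
        - (p : ℝ) * ((1 - c ^ (a + 1)) / (a + 1)) := by
    have hEq : Set.EqOn (fun t : ℝ => t ^ a * |-(p : ℝ) + ((p : ℝ) + 1) * t|)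
        (fun t : ℝ => ((p : ℝ) + 1) * t ^ (a + 1) - (p : ℝ) * t ^ a) (Set.uIcc c 1) := by
      intro t ht
      rw [Set.uIcc_of_le hc1] at ht
      obtain ⟨htc, ht1⟩ := ht
      have ht0 : 0 ≤ t := le_trans hc0.le htc
      have hpos : 0 ≤ -(p : ℝ) + ((p : ℝ) + 1) * t := by
        have : ((p:ℝ)+1) * c ≤ ((p:ℝ)+1) * t :=
          mul_le_mul_of_nonneg_left htc (by linarith)
        rw [hc, mul_div_cancel₀ _ hq1.ne'] at this
        linarith
      simp only [abs_of_nonneg hpos]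
      rw [← hmul t ht0]; ring
    rw [intervalIntegral.integral_congr hEq,
      intervalIntegral.integral_sub (hirb'.const_mul _) (hira'.const_mul _),
      intervalIntegral.integral_const_mul, intervalIntegral.integral_const_mul,
      integral_rpow (Or.inl ha1), integral_rpow (Or.inl ha2),
      Real.one_rpow, Real.one_rpow]
  -- combine
  have hsplit : (∫ t in (0:ℝ)..1, t ^ a * |-(p : ℝ) + ((p : ℝ) + 1) * t|)
      = (∫ t in (0:ℝ)..c, t ^ a * |-(p : ℝ) + ((p : ℝ) + 1) * t|)
        + ∫ t in c..(1:ℝ), t ^ a * |-(p : ℝ) + ((p : ℝ) + 1) * t| :=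
    (intervalIntegral.integral_add_adjacent_intervals hint1 hint2).symm
  have hexp : ((p : ℝ) + 3) / 2 = a + 1 + 1 := by rw [ha]; ring
  have hcpow : c ^ (((p : ℝ) + 3) / 2) = c ^ (a + 1) * c := by
    rw [hexp, Real.rpow_add_one hc0.ne']
  have hc2 : c ^ (a + 1 + 1) = c ^ (a + 1) * c := Real.rpow_add_one hc0.ne' (a + 1)
  have ha1ne : a + 1 ≠ 0 := by linarith
  have ha2ne : a + 1 + 1 ≠ 0 := by linarith
  have hq3 : ((p:ℝ) + 3) ≠ 0 := by linarith
  rw [hsplit, I1, I2, hexp, hc2]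
  generalize c ^ (a + 1) = X
  rw [hc, ha]
  have h1 : ((p:ℝ) - 1) / 2 + 1 ≠ 0 := by rw [ha] at ha1ne; exact ha1ne
  have h2 : ((p:ℝ) - 1) / 2 + 1 + 1 ≠ 0 := by rw [ha] at ha2ne; exact ha2ne
  have hne1 : ((p:ℝ) + 1) ≠ 0 := by linarith
  have h5 : (1:ℝ) + (p:ℝ) ≠ 0 := by linarith
  have h6 : (3:ℝ) + (p:ℝ) ≠ 0 := by linarith
  have h7 : (p:ℝ) - 1 + 2 ≠ 0 := by linarith
  have h8 : (p:ℝ) - 1 + 2 + 2 ≠ 0 := by linarith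
  field_simp
  ring
end

section
/- For every natural number p ≥ 2, (p+1) · ∫₀¹ t^((p−1)/2) · |−p + (p+2)·t| dt = (p+1) · ( (8(p+2)/((p+1)(p+3)))·(p/(p+2))^((p+3)/2) + 4/(p+1) − 4(p+2)/((p+1)(p+3)) ). -/
/-!
On `[0, 1]` the factor `b t - a` changes sign exactly once, at `t₀ = a / b`. Splitting the
integral there, both pieces are evaluated with the primitive
`G t = b t^(α+2)/(α+2) - a t^(α+1)/(α+1)` of `t^α (b t - a)`, giving `G 1 - 2 G t₀`; at the
root, `a t₀^(α+1) = b t₀^(α+2)`, so `G t₀` collapses to a single power of `a / b`.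
With `α = (p-1)/2`, `a = p`, `b = p+2` this is the claimed value.
-/

open intervalIntegral Set

namespace RpowMulLinear

noncomputable def primitive (a b α t : ℝ) : ℝ :=
  b * t ^ (α + 2) / (α + 2) - a * t ^ (α + 1) / (α + 1)

variable {a b α : ℝ}

theorem integral_eq_primitive_sub (hα : -1 < α) {x y : ℝ} (hx : 0 ≤ x) (hy : 0 ≤ y) :
    ∫ t in x..y, t ^ α * (b * t - a) = primitive a b α y - primitive a b α x := by
  have hsplit : EqOn (fun t => t ^ α * (b * t - a)) (fun t => b * t ^ (α + 1) - a * t ^ α)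
      (uIcc x y) := by
    intro t ht
    have ht0 : 0 ≤ t := le_trans (le_min hx hy) ht.1
    change t ^ α * (b * t - a) = b * t ^ (α + 1) - a * t ^ α
    rw [Real.rpow_add_one' ht0 (by linarith)]
    ring
  rw [integral_congr hsplit, integral_sub, integral_const_mul, integral_const_mul,
    integral_rpow (Or.inl hα), integral_rpow (Or.inl (by linarith)),
    show α + 1 + 1 = α + 2 by ring, primitive, primitive]
  · ring
  · exact (intervalIntegrable_rpow' (by linarith)).const_mul b
  · exact (intervalIntegrable_rpow' hα).const_mul a

theorem primitive_zero (hα : -1 < α) : primitive a b α 0 = 0 := by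
  rw [primitive, Real.zero_rpow (by linarith), Real.zero_rpow (by linarith)]
  ring

theorem primitive_one : primitive a b α 1 = b / (α + 2) - a / (α + 1) := by
  simp only [primitive, Real.one_rpow, mul_one]

theorem primitive_div (hα : -1 < α) (ha : 0 ≤ a) (hb : 0 < b) :
    primitive a b α (a / b) = -(b * (a / b) ^ (α + 2) / ((α + 1) * (α + 2))) := by
  have hroot : a * (a / b) ^ (α + 1) = b * (a / b) ^ (α + 2) := by
    rw [show α + 2 = α + 1 + 1 by ring,
      Real.rpow_add_one' (y := α + 1) (div_nonneg ha hb.le) (by linarith)]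
    linear_combination (-(a / b) ^ (α + 1)) * mul_div_cancel₀ a hb.ne'
  have h1 : α + 1 ≠ 0 := by linarith
  have h2 : α + 2 ≠ 0 := by linarith
  rw [primitive, mul_div_assoc a, ← mul_div_assoc, hroot]
  field_simp
  ring

theorem integral_rpow_mul_abs (hα : -1 < α) (ha : 0 ≤ a) (hab : a ≤ b) (hb : 0 < b) :
    ∫ t in (0 : ℝ)..1, t ^ α * |b * t - a| =
      b / (α + 2) - a / (α + 1) + 2 * b * (a / b) ^ (α + 2) / ((α + 1) * (α + 2)) := by
  set t₀ := a / b
  have ht₀ : 0 ≤ t₀ := div_nonneg ha hb.le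
  have ht₀_le : t₀ ≤ 1 := (div_le_one hb).mpr hab
  have hint : ∀ x y : ℝ,
      IntervalIntegrable (fun t => t ^ α * |b * t - a|) MeasureTheory.volume x y :=
    fun x y => (intervalIntegrable_rpow' hα).mul_continuousOn (by fun_prop)
  have hbelow : ∫ t in (0 : ℝ)..t₀, t ^ α * |b * t - a| =
      -∫ t in (0 : ℝ)..t₀, t ^ α * (b * t - a) := by
    rw [← integral_neg]
    refine integral_congr fun t ht => ?_
    rw [uIcc_of_le ht₀] at ht
    have : b * t ≤ a := by simpa [t₀, le_div_iff₀ hb, mul_comm] using ht.2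
    simp only [abs_of_nonpos (sub_nonpos.mpr this), mul_neg]
  have habove :
      ∫ t in t₀..1, t ^ α * |b * t - a| = ∫ t in t₀..1, t ^ α * (b * t - a) := by
    refine integral_congr fun t ht => ?_
    rw [uIcc_of_le ht₀_le] at ht
    have : a ≤ b * t := by simpa [t₀, div_le_iff₀ hb, mul_comm] using ht.1
    simp only [abs_of_nonneg (sub_nonneg.mpr this)]
  rw [← integral_add_adjacent_intervals (hint 0 t₀) (hint t₀ 1), hbelow, habove,
    integral_eq_primitive_sub hα le_rfl ht₀, integral_eq_primitive_sub hα ht₀ zero_le_one,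
    primitive_zero hα, primitive_one, primitive_div hα ha hb]
  ring

end RpowMulLinear

theorem stmt_12_general (p : ℕ) :
    ((p : ℝ) + 1) * ∫ t in (0:ℝ)..1, t ^ (((p : ℝ) - 1) / 2) * |-(p : ℝ) + ((p : ℝ) + 2) * t| =
    ((p : ℝ) + 1) * (8 * ((p : ℝ) + 2) / (((p : ℝ) + 1) * ((p : ℝ) + 3)) *
        ((p : ℝ) / ((p : ℝ) + 2)) ^ (((p : ℝ) + 3) / 2) +
      4 / ((p : ℝ) + 1) - 4 * ((p : ℝ) + 2) / (((p : ℝ) + 1) * ((p : ℝ) + 3))) := by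
  have hp : (0 : ℝ) ≤ p := p.cast_nonneg
  simp_rw [neg_add_eq_sub]
  rw [RpowMulLinear.integral_rpow_mul_abs (by linarith) hp (by linarith) (by linarith),
    show ((p : ℝ) - 1) / 2 + 1 = ((p : ℝ) + 1) / 2 by ring,
    show ((p : ℝ) - 1) / 2 + 2 = ((p : ℝ) + 3) / 2 by ring]
  have h1 : (p : ℝ) + 1 ≠ 0 := by positivity
  have h3 : (p : ℝ) + 3 ≠ 0 := by positivity
  field_simp
  ring

theorem stmt_12 (p : ℕ) (hp : 2 ≤ p) :
    ((p : ℝ) + 1) * ∫ t in (0:ℝ)..1, t ^ (((p : ℝ) - 1) / 2) * |-(p : ℝ) + ((p : ℝ) + 2) * t| =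
    ((p : ℝ) + 1) * (8 * ((p : ℝ) + 2) / (((p : ℝ) + 1) * ((p : ℝ) + 3)) *
        ((p : ℝ) / ((p : ℝ) + 2)) ^ (((p : ℝ) + 3) / 2) +
      4 / ((p : ℝ) + 1) - 4 * ((p : ℝ) + 2) / (((p : ℝ) + 1) * ((p : ℝ) + 3))) :=
  stmt_12_general p
end

section
/- lim_{p→∞} (p+2) · ( (8/(p+3))·(p/(p+1))^((p+3)/2) + 2/(p+1) − 4/(p+3) ) = 8/√e − 2, where p ranges over natural numbers tending to infinity. -/
/-!
Writing `(p / (p + 1)) ^ ((p + 3) / 2) = exp ((p + 3) / 2 * log (p / (p + 1)))` and using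
`x * log (1 - 1 / (x + 1)) → -1`, the power tends to `exp (-1 / 2) = 1 / √e`. Distributing the
factor `p + 2`, every other term is a multiple of a ratio `(p + a) / (p + b) → 1`, so the limit is
`8 / √e + 2 - 4`.
-/

open Filter Real Topology

lemma tendsto_add_div_add_atTop (a b : ℝ) :
    Tendsto (fun x : ℝ => (x + a) / (x + b)) atTop (𝓝 1) := by
  have hb : Tendsto (fun x : ℝ => x + b) atTop atTop := tendsto_atTop_add_const_right _ b tendsto_id
  have h : Tendsto (fun x : ℝ => 1 + (a - b) / (x + b)) atTop (𝓝 (1 + 0)) :=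
    tendsto_const_nhds.add (tendsto_const_nhds.div_atTop hb)
  rw [add_zero] at h
  refine h.congr' ?_
  filter_upwards [hb.eventually_ne_atTop 0] with x hx
  field_simp
  ring

lemma tendsto_mul_log_div_add_one_atTop :
    Tendsto (fun x : ℝ => x * log (x / (x + 1))) atTop (𝓝 (-1)) := by
  have h : Tendsto (fun x : ℝ => x * (-1 / (x + 1))) atTop (𝓝 (-1)) := by
    simpa [div_eq_mul_inv] using (tendsto_add_div_add_atTop 0 1).neg
  refine (tendsto_mul_log_one_add_of_tendsto h).congr' ?_
  filter_upwards [eventually_gt_atTop (-1)] with x hx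
  have : x + 1 ≠ 0 := by linarith
  congr 2
  field_simp
  ring

lemma tendsto_div_add_one_rpow_add_div_atTop (c d : ℝ) :
    Tendsto (fun x : ℝ => (x / (x + 1)) ^ ((x + c) / d)) atTop (𝓝 (exp (-1 / d))) := by
  have hratio : Tendsto (fun x : ℝ => (x + c) / x) atTop (𝓝 1) := by
    simpa using tendsto_add_div_add_atTop c 0
  have hlog : Tendsto (fun x : ℝ => (x + c) / x / d * (x * log (x / (x + 1)))) atTop
      (𝓝 (1 / d * -1)) :=
    (hratio.div_const d).mul tendsto_mul_log_div_add_one_atTop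
  rw [show 1 / d * -1 = -1 / d by ring] at hlog
  refine ((continuous_exp.tendsto _).comp hlog).congr' ?_
  filter_upwards [eventually_gt_atTop 0] with x hx
  rw [Function.comp_apply, rpow_def_of_pos (by positivity)]
  congr 1
  field_simp

theorem stmt_13 :
    Filter.Tendsto (fun p : ℕ =>
      ((p : ℝ) + 2) * (8 / ((p : ℝ) + 3) * ((p : ℝ) / ((p : ℝ) + 1)) ^ (((p : ℝ) + 3) / 2) +
        2 / ((p : ℝ) + 1) - 4 / ((p : ℝ) + 3)))
      Filter.atTop (nhds (8 / Real.sqrt (Real.exp 1) - 2)) := by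
  have hreal : Tendsto (fun x : ℝ => 8 * ((x + 2) / (x + 3) * (x / (x + 1)) ^ ((x + 3) / 2)) +
      2 * ((x + 2) / (x + 1)) - 4 * ((x + 2) / (x + 3))) atTop
      (𝓝 (8 * (1 * exp (-1 / 2)) + 2 * 1 - 4 * 1)) :=
    ((((tendsto_add_div_add_atTop 2 3).mul (tendsto_div_add_one_rpow_add_div_atTop 3 2)).const_mul
      8).add ((tendsto_add_div_add_atTop 2 1).const_mul 2)).sub
      ((tendsto_add_div_add_atTop 2 3).const_mul 4)
  have hlimit : 8 * (1 * exp (-1 / 2)) + 2 * 1 - 4 * 1 = 8 / sqrt (exp 1) - 2 := by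
    rw [sqrt_eq_rpow, exp_one_rpow, neg_div, exp_neg]
    ring
  rw [hlimit] at hreal
  refine (hreal.comp tendsto_natCast_atTop_atTop).congr fun p => ?_
  simp only [Function.comp_apply]
  field_simp
end

section
/- For every natural number n ≥ 2: n(n−1)·∫₀¹ (1−t)^(n−2) · |(n+1)·t − 1| dt = 2(n+1)·(1 − 1/(n+1))^n − 1. -/
/-!
On `[0, 1]` the factor `(n + 1) t - 1` changes sign once, at `c = 1/(n + 1)`, and
`(1 - t)^(n - 2) ((n + 1) t - 1)` has an explicit polynomial antiderivative `F`. Hence the integral of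
the absolute value is `F 0 + F 1 - 2 F c`, and the identity `(n + 1)(1 - c) = n` collapses this
to the closed form.
-/

open intervalIntegral Set

theorem integral_abs_eq_of_sign_change {f F : ℝ → ℝ} {a b c : ℝ} (hac : a ≤ c) (hcb : c ≤ b)
    (hF : ∀ x, HasDerivAt F (f x) x) (hf : Continuous f)
    (hneg : ∀ x ∈ Icc a c, f x ≤ 0) (hpos : ∀ x ∈ Icc c b, 0 ≤ f x) :
    ∫ x in a..b, |f x| = F a + F b - 2 * F c := by
  have hint : ∀ u v, IntervalIntegrable f MeasureTheory.volume u v :=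
    fun _ _ ↦ hf.intervalIntegrable _ _
  have hleft : ∫ x in a..c, |f x| = ∫ x in a..c, -f x :=
    integral_congr fun x hx ↦ abs_of_nonpos (hneg x (by rwa [uIcc_of_le hac] at hx))
  have hright : ∫ x in c..b, |f x| = ∫ x in c..b, f x :=
    integral_congr fun x hx ↦ abs_of_nonneg (hpos x (by rwa [uIcc_of_le hcb] at hx))
  rw [← integral_add_adjacent_intervals (hf.abs.intervalIntegrable a c)
      (hf.abs.intervalIntegrable c b), hleft, hright, integral_neg,
    integral_eq_sub_of_hasDerivAt (fun x _ ↦ hF x) (hint a c),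
    integral_eq_sub_of_hasDerivAt (fun x _ ↦ hF x) (hint c b)]
  ring

theorem hasDerivAt_one_sub_pow_antideriv (m : ℕ) (a t : ℝ) :
    HasDerivAt (fun t : ℝ ↦ a * (1 - t) ^ (m + 2) / (m + 2) - (a - 1) * (1 - t) ^ (m + 1) / (m + 1))
      ((1 - t) ^ m * (a * t - 1)) t := by
  have h : HasDerivAt (fun t : ℝ ↦ 1 - t) (-1) t := by
    simpa using (hasDerivAt_id t).const_sub 1
  refine ((((h.fun_pow (m + 2)).const_mul a).div_const ((m : ℝ) + 2)).fun_sub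
    (((h.fun_pow (m + 1)).const_mul (a - 1)).div_const ((m : ℝ) + 1))).congr_deriv ?_
  rw [show m + 2 - 1 = m + 1 from rfl, Nat.add_sub_cancel, pow_succ]
  push_cast
  field_simp
  ring

theorem integral_one_sub_pow_mul_abs (m : ℕ) {a : ℝ} (ha : 1 ≤ a) :
    ((m : ℝ) + 1) * ((m : ℝ) + 2) * ∫ t in (0 : ℝ)..1, (1 - t) ^ m * |a * t - 1| =
      m + 2 - a + 2 * (a - 1) * (1 - 1 / a) ^ (m + 1) := by
  have ha0 : 0 < a := by linarith
  have hc0 : 0 ≤ 1 / a := by positivity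
  have hc1 : 1 / a ≤ 1 := (div_le_one ha0).2 ha
  have hsign : ∀ t, a * t - 1 = a * (t - 1 / a) := fun t ↦ by field_simp
  have habs : ∫ t in (0 : ℝ)..1, (1 - t) ^ m * |a * t - 1| =
      ∫ t in (0 : ℝ)..1, |(1 - t) ^ m * (a * t - 1)| := by
    refine integral_congr fun t ht ↦ ?_
    rw [uIcc_of_le zero_le_one] at ht
    rw [abs_mul, abs_of_nonneg (pow_nonneg (sub_nonneg.2 ht.2) m)]
  rw [habs, integral_abs_eq_of_sign_change hc0 hc1 (hasDerivAt_one_sub_pow_antideriv m a)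
    (by fun_prop)]
  · have hq : a * (1 - 1 / a) = a - 1 := by field_simp
    generalize 1 - 1 / a = q at hq ⊢
    simp only [sub_self, sub_zero, one_pow, zero_pow (Nat.succ_ne_zero _)]
    rw [pow_succ q (m + 1)]
    field_simp
    linear_combination (-2 * ((m : ℝ) + 1) * q ^ (m + 1)) * hq
  · intro t ht
    exact mul_nonpos_of_nonneg_of_nonpos (pow_nonneg (by linarith [ht.2]) m)
      (by rw [hsign]; exact mul_nonpos_of_nonneg_of_nonpos ha0.le (by linarith [ht.2]))
  · intro t ht
    exact mul_nonneg (pow_nonneg (by linarith [ht.2]) m)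
      (by rw [hsign]; exact mul_nonneg ha0.le (by linarith [ht.1]))

theorem stmt_16 (n : ℕ) (hn : 2 ≤ n) :
    (n : ℝ) * ((n : ℝ) - 1) *
        ∫ t in (0:ℝ)..1, (1 - t) ^ (n - 2) * |((n : ℝ) + 1) * t - 1| =
      2 * ((n : ℝ) + 1) * (1 - 1 / ((n : ℝ) + 1)) ^ n - 1 := by
  obtain ⟨m, rfl⟩ := Nat.exists_eq_add_of_le' hn
  have key := integral_one_sub_pow_mul_abs m (a := (m : ℝ) + 2 + 1)
    (le_add_of_nonneg_left (by positivity))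
  have hq : ((m : ℝ) + 2 + 1) * (1 - 1 / ((m : ℝ) + 2 + 1)) = m + 2 := by field_simp; ring
  rw [Nat.add_sub_cancel]
  push_cast
  generalize 1 - 1 / ((m : ℝ) + 2 + 1) = q at key hq ⊢
  linear_combination key - 2 * q ^ (m + 1) * hq
end

section
/- For natural numbers n ≥ 2 and q ≥ 0: (Γ(n+q)/(Γ(n−1)·Γ(1+q))) · Σ_{m=0}^{q} C(q,m) · 2^m / (n+m−1) · 2^{n−1} ≤ 2^{n−1} · 3^q · C(n−1+q, q), where C denotes binomial coefficients. -/
/-! The Gamma quotient is `(n - 1) · C(n - 1 + q, q)`, and bounding every denominator `n + m - 1`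
from below by `n - 1` turns the sum into `(1 + 2)^q / (n - 1)` by the binomial theorem. -/

open Finset

theorem Real.Gamma_add_one_add_div_Gamma_mul_Gamma (m q : ℕ) :
    Real.Gamma ((m : ℝ) + 1 + q) / (Real.Gamma m * Real.Gamma (1 + q)) =
      m * (m + q).choose q := by
  cases m with
  | zero => simp [Real.Gamma_zero]
  | succ m =>
    have hfact := Nat.add_choose_mul_factorial_mul_factorial (m + 1) q
    rw [show ((m + 1 : ℕ) : ℝ) + 1 + q = ((m + 1 + q : ℕ) : ℝ) + 1 by push_cast; ring,
      add_comm (1 : ℝ), Real.Gamma_nat_eq_factorial, Nat.cast_succ, Real.Gamma_nat_eq_factorial,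
      Real.Gamma_nat_eq_factorial, ← hfact, Nat.factorial_succ]
    push_cast
    field_simp

theorem sum_choose_mul_pow_div_add_le {x : ℝ} (hx : 0 < x) {c : ℝ} (hc : 0 ≤ c) (q : ℕ) :
    ∑ m ∈ range (q + 1), (q.choose m : ℝ) * c ^ m / (x + m) ≤ (1 + c) ^ q / x := by
  have hbinom : (1 + c) ^ q = ∑ m ∈ range (q + 1), (q.choose m : ℝ) * c ^ m := by
    rw [add_comm, add_pow]
    exact sum_congr rfl fun m _ => by ring
  rw [hbinom, sum_div]
  gcongr with m
  exact le_add_of_nonneg_right m.cast_nonneg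

theorem stmt_18 (n q : ℕ) (hn : 2 ≤ n) :
    (Real.Gamma ((n : ℝ) + q) / (Real.Gamma ((n : ℝ) - 1) * Real.Gamma (1 + (q : ℝ)))) *
        (∑ m ∈ Finset.range (q + 1),
          (Nat.choose q m : ℝ) * 2 ^ m / ((n : ℝ) + m - 1)) * 2 ^ (n - 1) ≤
      (2 : ℝ) ^ (n - 1) * 3 ^ q * (Nat.choose (n - 1 + q) q) := by
  obtain ⟨k, rfl⟩ : ∃ k, n = k + 1 := ⟨n - 1, by omega⟩
  have hk : (0 : ℝ) < k := by exact_mod_cast (by omega : 0 < k)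
  have hsum := sum_choose_mul_pow_div_add_le hk zero_le_two q
  have hden (m : ℕ) : (k : ℝ) + 1 + m - 1 = k + m := by ring
  simp only [hden, Nat.add_sub_cancel, Nat.cast_succ, add_sub_cancel_right,
    Real.Gamma_add_one_add_div_Gamma_mul_Gamma]
  calc (k : ℝ) * ((k + q).choose q) * (∑ m ∈ range (q + 1), (q.choose m : ℝ) * 2 ^ m / (k + m))
        * 2 ^ k
      ≤ k * ((k + q).choose q) * ((1 + 2) ^ q / k) * 2 ^ k := by gcongr
    _ = 2 ^ k * 3 ^ q * ((k + q).choose q) := by field_simp; norm_num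
end
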